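/- arXiv:2301.03566 — 2 statements merged into one kernel-verified Lean document; each statement's English description precedes it below -/
import Mathlib

section
/- Let γ, ν ∈ ℝ^ℓ be nonnegative vectors and let T be an extreme point of the convex set J^{γ,ν}_{ℓ,k}. Then T has at most ℓ·2^{ℓ−1} pairwise distinct columns. -/
open scoped Classical ENNReal
open Finset

noncomputable section

/-- `p` is a probability distribution on `Fin k`. -/
def IsDist {k : ℕ} (p : Fin k → ℝ) : Prop :=
  (∀ i, 0 ≤ p i) ∧ ∑ i, p i = 1

/-- `T` is a channel from `[k]` to `[ℓ]`: nonnegative entries, columns sum to 1. -/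
def IsChannel {ℓ k : ℕ} (T : Matrix (Fin ℓ) (Fin k) ℝ) : Prop :=
  (∀ r c, 0 ≤ T r c) ∧ ∀ c, ∑ r, T r c = 1

/-- Squared Hellinger divergence `d_h²(p,q) = Σ_i (√p_i − √q_i)²`. -/
def hellingerSq {k : ℕ} (p q : Fin k → ℝ) : ℝ :=
  ∑ i, (Real.sqrt (p i) - Real.sqrt (q i)) ^ 2

/-- Total variation distance `d_TV(p,q) = (1/2) Σ_i |p_i − q_i|`. -/
def tvDist {k : ℕ} (p q : Fin k → ℝ) : ℝ :=
  (1 / 2) * ∑ i, |p i - q i|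

/-- `T` is an `ε`-LDP channel: `T(r,c) ≤ e^ε T(r,c')` for all rows `r`, columns `c, c'`. -/
def IsLDP {ℓ k : ℕ} (ε : ℝ) (T : Matrix (Fin ℓ) (Fin k) ℝ) : Prop :=
  IsChannel T ∧ ∀ r c c', T r c ≤ Real.exp ε * T r c'

/-- The LP family of channels `J^{γ,ν}_{ℓ,k}`:
channels `T` with `T(j,i) ≤ γ_j T(j,i') + ν_j` for all rows `j` and columns `i, i'`. -/
def IsLP {ℓ k : ℕ} (γ ν : Fin ℓ → ℝ) (T : Matrix (Fin ℓ) (Fin k) ℝ) : Prop :=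
  IsChannel T ∧ ∀ (j : Fin ℓ) (i i' : Fin k), T j i ≤ γ j * T j i' + ν j

/-- Minimum entry of row `r` of `T`. -/
def rowMin {ℓ k : ℕ} (T : Matrix (Fin ℓ) (Fin k) ℝ) (r : Fin ℓ) : ℝ :=
  sInf (Set.range fun c => T r c)

/-- Maximum entry of row `r` of `T`. -/
def rowMax {ℓ k : ℕ} (T : Matrix (Fin ℓ) (Fin k) ℝ) (r : Fin ℓ) : ℝ :=
  sSup (Set.range fun c => T r c)

/-- The entry `T(r,c)` is min-tight: `T(r,c) = m_r` and `M_r = γ_r m_r + ν_r`. -/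
def MinTight {ℓ k : ℕ} (γ ν : Fin ℓ → ℝ) (T : Matrix (Fin ℓ) (Fin k) ℝ)
    (r : Fin ℓ) (c : Fin k) : Prop :=
  T r c = rowMin T r ∧ rowMax T r = γ r * rowMin T r + ν r

/-- The entry `T(r,c)` is max-tight: `T(r,c) = M_r` and `M_r = γ_r m_r + ν_r`. -/
def MaxTight {ℓ k : ℕ} (γ ν : Fin ℓ → ℝ) (T : Matrix (Fin ℓ) (Fin k) ℝ)
    (r : Fin ℓ) (c : Fin k) : Prop :=
  T r c = rowMax T r ∧ rowMax T r = γ r * rowMin T r + ν r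


/-!
If two entries of one column of `T` lie strictly inside the ranges of their rows, moving them
by `+t` and `-t` keeps the column sums and, for small `t`, keeps every row inside its range,
hence keeps `T` in the family; so an extreme point has in each column at most one entry that is
neither the minimum nor the maximum of its row. A column is then determined by the position `j`
of that entry and by which extreme each other entry attains, the entry at `j` being fixed by the
column sum; this leaves at most `ℓ · 2^(ℓ-1)` columns.
-/

open Filter Topology

theorem eq_zero_of_mem_extremePoints_of_eventually_add_smul_mem {E : Type*} [AddCommGroup E]
    [Module ℝ E] {A : Set E} {x v : E} (hx : x ∈ A.extremePoints ℝ)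
    (hv : ∀ᶠ t in 𝓝 (0 : ℝ), x + t • v ∈ A) : v = 0 := by
  obtain ⟨ε, hε, hball⟩ := Metric.eventually_nhds_iff.mp hv
  have hmem : ∀ s : ℝ, |s| = ε / 2 → x + s • v ∈ A := fun s hs =>
    hball (by rw [Real.dist_eq, sub_zero, hs]; linarith)
  have hplus := hmem (ε / 2) (abs_of_pos (by positivity))
  have hminus : x - (ε / 2) • v ∈ A := by
    simpa [neg_smul, ← sub_eq_add_neg] using
      hmem (-(ε / 2)) (by rw [abs_neg, abs_of_pos (by positivity)])
  have hfix : x + (ε / 2) • v = x := hx.2 hplus hminus (mem_openSegment_add_sub x _)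
  exact (smul_eq_zero.mp (add_eq_left.mp hfix)).resolve_left (by positivity)

theorem card_le_two_pow_of_forall_ne_eq_or_eq {ι α : Type*} [Fintype ι]
    [AddCommGroup α] (a b : ι → α) (j : ι) (σ : α) (s : Finset (ι → α))
    (hsum : ∀ v ∈ s, ∑ r, v r = σ) (hab : ∀ v ∈ s, ∀ r ≠ j, v r = a r ∨ v r = b r) :
    s.card ≤ 2 ^ (Fintype.card ι - 1) := by
  let pattern : (ι → α) → ({r // r ≠ j} → Bool) := fun v r => decide (v r = b r)
  have hinj : Set.InjOn pattern s := by
    intro v hv w hw hvw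
    have hoff : ∀ r ≠ j, v r = w r := by
      intro r hr
      have hr' : (v r = b r) ↔ (w r = b r) := by simpa [pattern] using congrFun hvw ⟨r, hr⟩
      by_cases hvb : v r = b r
      · rw [hvb, hr'.mp hvb]
      · rw [(hab v hv r hr).resolve_right hvb, (hab w hw r hr).resolve_right (mt hr'.mpr hvb)]
    have hj : v j = w j := by
      have hv' := Finset.add_sum_erase Finset.univ v (Finset.mem_univ j)
      have hw' := Finset.add_sum_erase Finset.univ w (Finset.mem_univ j)
      have herase : ∑ r ∈ Finset.univ.erase j, v r = ∑ r ∈ Finset.univ.erase j, w r :=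
        Finset.sum_congr rfl fun r hr => hoff r (Finset.ne_of_mem_erase hr)
      rw [hsum v hv, herase] at hv'
      rw [hsum w hw] at hw'
      exact add_right_cancel (hv'.trans hw'.symm)
    funext r
    by_cases hr : r = j
    · rw [hr, hj]
    · exact hoff r hr
  calc s.card ≤ (Finset.univ : Finset ({r // r ≠ j} → Bool)).card :=
        Finset.card_le_card_of_injOn pattern (fun _ _ => Finset.mem_coe.mpr (mem_univ _)) hinj
    _ = 2 ^ (Fintype.card ι - 1) := by simp

section RowRange

variable {ℓ k : ℕ} (T : Matrix (Fin ℓ) (Fin k) ℝ) (r : Fin ℓ)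

theorem rowMin_le (c : Fin k) : rowMin T r ≤ T r c :=
  csInf_le (Set.finite_range _).bddBelow ⟨c, rfl⟩

theorem le_rowMax (c : Fin k) : T r c ≤ rowMax T r :=
  le_csSup (Set.finite_range _).bddAbove ⟨c, rfl⟩

theorem exists_eq_rowMin [Nonempty (Fin k)] : ∃ c, T r c = rowMin T r :=
  (Set.range_nonempty _).csInf_mem (Set.finite_range _)

theorem exists_eq_rowMax [Nonempty (Fin k)] : ∃ c, T r c = rowMax T r :=
  (Set.range_nonempty _).csSup_mem (Set.finite_range _)

end RowRange

namespace IsLP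

variable {ℓ k : ℕ} {γ ν : Fin ℓ → ℝ} {T S : Matrix (Fin ℓ) (Fin k) ℝ}

theorem rowMax_le [Nonempty (Fin k)] (hT : IsLP γ ν T) (j : Fin ℓ) :
    rowMax T j ≤ γ j * rowMin T j + ν j := by
  obtain ⟨a, ha⟩ := exists_eq_rowMax T j
  obtain ⟨b, hb⟩ := exists_eq_rowMin T j
  rw [← ha, ← hb]
  exact hT.2 j a b

theorem rowMin_nonneg [Nonempty (Fin k)] (hT : IsLP γ ν T) (j : Fin ℓ) : 0 ≤ rowMin T j := by
  obtain ⟨b, hb⟩ := exists_eq_rowMin T j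
  exact hb ▸ hT.1.1 j b

theorem of_mem_Icc_rowMin_rowMax (hγ : ∀ j, 0 ≤ γ j) (hT : IsLP γ ν T)
    (hS : ∀ c, ∑ r, S r c = 1) (hST : ∀ j i, S j i ∈ Set.Icc (rowMin T j) (rowMax T j)) :
    IsLP γ ν S := by
  refine ⟨⟨fun j i => ?_, hS⟩, fun j i i' => ?_⟩ <;> have : Nonempty (Fin k) := ⟨i⟩
  · exact (hT.rowMin_nonneg j).trans (hST j i).1
  · calc S j i ≤ rowMax T j := (hST j i).2
      _ ≤ γ j * rowMin T j + ν j := hT.rowMax_le j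
      _ ≤ γ j * S j i' + ν j := by gcongr; exacts [hγ j, (hST j i').1]

theorem eventually_add_smul (hγ : ∀ j, 0 ≤ γ j) (hT : IsLP γ ν T)
    {D : Matrix (Fin ℓ) (Fin k) ℝ} (hD : ∀ c, ∑ r, D r c = 0)
    (hDT : ∀ j i, D j i ≠ 0 → T j i ∈ Set.Ioo (rowMin T j) (rowMax T j)) :
    ∀ᶠ t in 𝓝 (0 : ℝ), IsLP γ ν (T + t • D) := by
  have hentry : ∀ j i, ∀ᶠ t in 𝓝 (0 : ℝ),
      T j i + t * D j i ∈ Set.Icc (rowMin T j) (rowMax T j) := by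
    intro j i
    by_cases h : D j i = 0
    · exact .of_forall fun t => by simp [h, rowMin_le, le_rowMax]
    · have hcont : Continuous fun t : ℝ => T j i + t * D j i := by fun_prop
      exact ((hcont.tendsto' 0 (T j i) (by simp)).eventually
        (isOpen_Ioo.mem_nhds (hDT j i h))).mono fun _ h => Set.Ioo_subset_Icc_self h
  filter_upwards [eventually_all.mpr fun j => eventually_all.mpr (hentry j)] with t ht
  refine hT.of_mem_Icc_rowMin_rowMax hγ (fun c => ?_) ht
  simp [Finset.sum_add_distrib, ← Finset.mul_sum, hT.1.2 c, hD c]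

end IsLP

theorem row_eq_of_mem_Ioo_of_mem_extremePoints {ℓ k : ℕ} {γ ν : Fin ℓ → ℝ}
    (hγ : ∀ j, 0 ≤ γ j) {T : Matrix (Fin ℓ) (Fin k) ℝ}
    (hT : T ∈ {S : Matrix (Fin ℓ) (Fin k) ℝ | IsLP γ ν S}.extremePoints ℝ) {c : Fin k}
    {j₁ j₂ : Fin ℓ} (h₁ : T j₁ c ∈ Set.Ioo (rowMin T j₁) (rowMax T j₁))
    (h₂ : T j₂ c ∈ Set.Ioo (rowMin T j₂) (rowMax T j₂)) : j₁ = j₂ := by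
  by_contra hne
  set D : Matrix (Fin ℓ) (Fin k) ℝ := Matrix.single j₁ c 1 - Matrix.single j₂ c 1
  have hD : D ≠ 0 := fun h => by
    simpa [D, Matrix.single_apply, Ne.symm hne] using congrFun (congrFun h j₁) c
  refine hD (eq_zero_of_mem_extremePoints_of_eventually_add_smul_mem hT
    ((show IsLP γ ν T from hT.1).eventually_add_smul hγ (fun c' => ?_) fun j i hji => ?_))
  · rcases eq_or_ne c c' with rfl | hc
    · simp [D, Matrix.single_apply]
    · simp [D, hc]
  · by_cases hj₁ : j₁ = j ∧ c = i
    · obtain ⟨rfl, rfl⟩ := hj₁; exact h₁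
    by_cases hj₂ : j₂ = j ∧ c = i
    · obtain ⟨rfl, rfl⟩ := hj₂; exact h₂
    simp [D, hj₁, hj₂] at hji

theorem exists_forall_ne_eq_rowMin_or_eq_rowMax {ℓ k : ℕ} {γ ν : Fin ℓ → ℝ}
    (hγ : ∀ j, 0 ≤ γ j) {T : Matrix (Fin ℓ) (Fin k) ℝ}
    (hT : T ∈ {S : Matrix (Fin ℓ) (Fin k) ℝ | IsLP γ ν S}.extremePoints ℝ) (c : Fin k) :
    ∃ j, ∀ r ≠ j, T r c = rowMin T r ∨ T r c = rowMax T r := by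
  obtain ⟨j₀, -⟩ := Finset.nonempty_of_sum_ne_zero
    (((show IsLP γ ν T from hT.1).1.2 c).symm ▸ one_ne_zero)
  by_contra! h
  have hIoo : ∀ r, T r c ≠ rowMin T r ∧ T r c ≠ rowMax T r →
      T r c ∈ Set.Ioo (rowMin T r) (rowMax T r) := fun r hr =>
    ⟨(rowMin_le T r c).lt_of_ne' hr.1, (le_rowMax T r c).lt_of_ne hr.2⟩
  obtain ⟨r₁, -, h₁⟩ := h j₀
  obtain ⟨r₂, hne, h₂⟩ := h r₁
  exact hne (row_eq_of_mem_Ioo_of_mem_extremePoints hγ hT (hIoo r₂ h₂) (hIoo r₁ h₁))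

theorem stmt15_general (k ℓ : ℕ) (γ ν : Fin ℓ → ℝ) (hγ : ∀ j, 0 ≤ γ j)
    (T : Matrix (Fin ℓ) (Fin k) ℝ)
    (hT : T ∈ ({S : Matrix (Fin ℓ) (Fin k) ℝ | IsLP γ ν S}).extremePoints ℝ) :
    (Finset.univ.image (fun c => fun r => T r c)).card ≤ ℓ * 2 ^ (ℓ - 1) := by
  have hLP : IsLP γ ν T := hT.1
  set cols := Finset.univ.image (fun c => fun r => T r c)
  set P : Fin ℓ → (Fin ℓ → ℝ) → Prop :=
    fun j v => ∀ r ≠ j, v r = rowMin T r ∨ v r = rowMax T r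
  have hcover : cols ⊆ Finset.univ.biUnion fun j => cols.filter (P j) := by
    intro v hv
    obtain ⟨c, -, rfl⟩ := Finset.mem_image.mp hv
    obtain ⟨j, hj⟩ := exists_forall_ne_eq_rowMin_or_eq_rowMax hγ hT c
    exact Finset.mem_biUnion.mpr ⟨j, Finset.mem_univ j, Finset.mem_filter.mpr ⟨hv, hj⟩⟩
  have hcard : ∀ j, (cols.filter (P j)).card ≤ 2 ^ (ℓ - 1) := fun j => by
    simpa using card_le_two_pow_of_forall_ne_eq_or_eq (rowMin T) (rowMax T) j 1 _
      (fun v hv => by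
        obtain ⟨c, -, rfl⟩ := Finset.mem_image.mp (Finset.mem_filter.mp hv).1
        exact hLP.1.2 c)
      fun v hv => (Finset.mem_filter.mp hv).2
  calc cols.card ≤ (Finset.univ.biUnion fun j => cols.filter (P j)).card :=
        Finset.card_le_card hcover
    _ ≤ ∑ j, (cols.filter (P j)).card := Finset.card_biUnion_le
    _ ≤ ∑ _j : Fin ℓ, 2 ^ (ℓ - 1) := Finset.sum_le_sum fun j _ => hcard j
    _ = ℓ * 2 ^ (ℓ - 1) := by simp

/-- An extreme point of the LP family has at most `ℓ·2^{ℓ−1}` pairwise distinct columns. -/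
theorem stmt15 (k ℓ : ℕ) (γ ν : Fin ℓ → ℝ) (hγ : ∀ j, 0 ≤ γ j) (hν : ∀ j, 0 ≤ ν j)
    (T : Matrix (Fin ℓ) (Fin k) ℝ)
    (hT : T ∈ ({S : Matrix (Fin ℓ) (Fin k) ℝ | IsLP γ ν S}).extremePoints ℝ) :
    (Finset.univ.image (fun c => fun r => T r c)).card ≤ ℓ * 2 ^ (ℓ - 1) :=
  stmt15_general k ℓ γ ν hγ T hT
end
end

section
/- Fix ε > 0 and α > 1, and set K := e^{(α−1)ε}. For x, y ∈ [0,1], define F_α(x,y) := x^α·y^{1−α} + (1−x)^α·(1−y)^{1−α}, with arithmetic in the extended nonnegative reals [0,∞] and the convention 0^t = ∞ for t < 0 and 0^0 = 1. A channel T from [k] to [2] with first row (x₁, …, x_k) is (ε,α)-RDP if F_α(x_i, x_j) ≤ K for all i, j ∈ [k]; the set C of (ε,α)-RDP channels from [k] to [2] is convex. Let p, q be distributions on [k] with p_i + q_i > 0 for all i, and let A := {(Tp, Tq) : T ∈ C}. If T ∈ C and (Tp, Tq) is an extreme point of A, then there exist a threshold channel T₂ ∈ T^thresh_{2,k} for (p,q)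 and an extreme point T₁ of the set of (ε,α)-RDP channels from [2] to [2] such that (Tp, Tq) = ((T₁·T₂)p, (T₁·T₂)q), where T₁·T₂ denotes the matrix product. -/
/-!
Let `x` be the first row of `T`, with minimum `a` and maximum `b`. Since the region
`{(x, y) : F_α(x, y) ≤ K}` is convex, every channel whose first row lies in `[a, b]^k` is RDP.
If some `x_j` lay strictly between `a` and `b`, or if `x_u = x_v ≠ x_w` for some `w` strictly
between `u` and `v` in likelihood ratio, two such channels would have outputs symmetric about
`(Tp, Tq)`, contradicting extremality. Hence `T = T₁ T₂` with `T₂` a threshold channel and `T₁`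
the binary channel with first row `(b, a)`. The outputs of `U T₂` are linear in `U`, so the binary
RDP channels `U` reproducing `(Tp, Tq)` form a compact face of the binary RDP channels; by
Krein–Milman it contains an extreme point.
-/

open scoped Classical ENNReal
open Finset

noncomputable section

/-- The deterministic channel induced by a map `f : [k] → [ℓ]`. -/
def detChannel {k ℓ : ℕ} (f : Fin k → Fin ℓ) : Matrix (Fin ℓ) (Fin k) ℝ :=
  fun r c => if r = f c then 1 else 0

/-- Likelihood ratio `p_i / q_i`, taken to be `+∞` when `q_i = 0`. -/
def lr {k : ℕ} (p q : Fin k → ℝ) (i : Fin k) : EReal :=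
  if q i = 0 then ⊤ else ((p i / q i : ℝ) : EReal)

/-- `T` is a threshold channel for `(p, q)`: it is deterministic, induced by a map `f`,
and whenever `p_u/q_u < p_v/q_v` and `f u = f v`, every `w` whose likelihood ratio lies
strictly between those of `u` and `v` satisfies `f w = f u`. -/
def IsThresholdChannel {k ℓ : ℕ} (p q : Fin k → ℝ) (T : Matrix (Fin ℓ) (Fin k) ℝ) : Prop :=
  ∃ f : Fin k → Fin ℓ, T = detChannel f ∧
    ∀ u v w : Fin k, lr p q u < lr p q v → f u = f v →
      lr p q u < lr p q w → lr p q w < lr p q v → f w = f u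

/-- `F_α(x,y) = x^α y^{1−α} + (1−x)^α (1−y)^{1−α}` in the extended nonnegative reals
(with `0^t = ∞` for `t < 0` and `0^0 = 1`, the `ENNReal.rpow` conventions). -/
def Fα (α x y : ℝ) : ℝ≥0∞ :=
  ENNReal.ofReal x ^ α * ENNReal.ofReal y ^ (1 - α) +
    ENNReal.ofReal (1 - x) ^ α * ENNReal.ofReal (1 - y) ^ (1 - α)

/-- A channel `T` from `[k]` to `[2]`, with first row `(x₁, …, x_k)`, is `(ε,α)`-RDP if
`F_α(x_i, x_j) ≤ e^{(α−1)ε}` for all `i, j`. -/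
def IsRDP (ε α : ℝ) {k : ℕ} (T : Matrix (Fin 2) (Fin k) ℝ) : Prop :=
  IsChannel T ∧
    ∀ i j : Fin k, Fα α (T 0 i) (T 0 j) ≤ ENNReal.ofReal (Real.exp ((α - 1) * ε))

open scoped Matrix

def powPersp (α x y : ℝ) : ℝ≥0∞ :=
  ENNReal.ofReal x ^ α * ENNReal.ofReal y ^ (1 - α)

lemma Fα_eq_powPersp (α x y : ℝ) : Fα α x y = powPersp α x y + powPersp α (1 - x) (1 - y) := rfl

lemma powPersp_self (α : ℝ) {x : ℝ} (hx : 0 ≤ x) : powPersp α x x = ENNReal.ofReal x := by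
  rcases hx.eq_or_lt with rfl | hx
  · rcases lt_or_ge 0 α with hα | hα
    · simp [powPersp, ENNReal.zero_rpow_of_pos hα]
    · simp [powPersp, ENNReal.zero_rpow_of_pos (by linarith : 0 < 1 - α)]
  · rw [powPersp, ← ENNReal.rpow_add _ _ (by simpa using hx) ENNReal.ofReal_ne_top]
    simp

lemma powPersp_eq_ofReal {α x y : ℝ} (hα : 0 ≤ α) (hx : 0 ≤ x) (hy : 0 < y) :
    powPersp α x y = ENNReal.ofReal (x ^ α * y ^ (1 - α)) := by
  rw [powPersp, ENNReal.ofReal_mul (Real.rpow_nonneg hx α), ENNReal.ofReal_rpow_of_nonneg hx hα,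
    ENNReal.ofReal_rpow_of_pos hy]

lemma powPersp_mul_mul (α : ℝ) {c : ℝ} (hc : 0 ≤ c) (x y : ℝ) :
    powPersp α (c * x) (c * y) = ENNReal.ofReal c * powPersp α x y := by
  rcases hc.eq_or_lt with rfl | hc
  · simp [powPersp_self]
  have hc' : ENNReal.ofReal c ≠ 0 := by simpa using hc
  rw [powPersp, powPersp, ENNReal.ofReal_mul hc.le, ENNReal.ofReal_mul hc.le,
    ENNReal.mul_rpow_of_ne_top ENNReal.ofReal_ne_top ENNReal.ofReal_ne_top,
    ENNReal.mul_rpow_of_ne_top ENNReal.ofReal_ne_top ENNReal.ofReal_ne_top]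
  calc _ = (ENNReal.ofReal c ^ α * ENNReal.ofReal c ^ (1 - α)) *
        (ENNReal.ofReal x ^ α * ENNReal.ofReal y ^ (1 - α)) := by ring
    _ = _ := by rw [← ENNReal.rpow_add _ _ hc' ENNReal.ofReal_ne_top]; simp

lemma powPersp_zero_right {α x : ℝ} (hα : 1 < α) (hx : 0 < x) : powPersp α x 0 = ⊤ := by
  rw [powPersp, ENNReal.ofReal_zero, ENNReal.zero_rpow_of_neg (by linarith)]
  exact ENNReal.mul_top (ENNReal.rpow_pos (by simpa using hx) ENNReal.ofReal_ne_top).ne'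

/-- Two-point reverse Hölder inequality: `x ^ α * y ^ (1 - α) = y * (x / y) ^ α` is the perspective
of the convex function `u ↦ u ^ α`. -/
lemma rpow_mul_rpow_one_sub_convex {α t s x₁ y₁ x₂ y₂ : ℝ} (hα : 1 ≤ α) (ht : 0 < t) (hs : 0 < s)
    (hx₁ : 0 ≤ x₁) (hx₂ : 0 ≤ x₂) (hy₁ : 0 < y₁) (hy₂ : 0 < y₂) :
    (t * x₁ + s * x₂) ^ α * (t * y₁ + s * y₂) ^ (1 - α) ≤
      t * (x₁ ^ α * y₁ ^ (1 - α)) + s * (x₂ ^ α * y₂ ^ (1 - α)) := by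
  have persp : ∀ x y : ℝ, 0 ≤ x → 0 < y → x ^ α * y ^ (1 - α) = y * (x / y) ^ α := by
    intro x y hx hy
    rw [Real.div_rpow hx hy.le, Real.rpow_sub hy, Real.rpow_one]
    field_simp
  set Y := t * y₁ + s * y₂
  have hY : 0 < Y := by positivity
  have hJ : (t * y₁ / Y * (x₁ / y₁) + s * y₂ / Y * (x₂ / y₂)) ^ α ≤
      t * y₁ / Y * (x₁ / y₁) ^ α + s * y₂ / Y * (x₂ / y₂) ^ α :=
    (convexOn_rpow hα).2 (div_nonneg hx₁ hy₁.le) (div_nonneg hx₂ hy₂.le)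
      (by positivity) (by positivity) (by rw [← add_div]; exact div_self hY.ne')
  have hmean : t * y₁ / Y * (x₁ / y₁) + s * y₂ / Y * (x₂ / y₂) = (t * x₁ + s * x₂) / Y := by
    field_simp
  rw [hmean] at hJ
  rw [persp _ _ (by positivity) hY, persp _ _ hx₁ hy₁, persp _ _ hx₂ hy₂]
  calc Y * ((t * x₁ + s * x₂) / Y) ^ α
      ≤ Y * (t * y₁ / Y * (x₁ / y₁) ^ α + s * y₂ / Y * (x₂ / y₂) ^ α) := by gcongr
    _ = _ := by field_simp

lemma powPersp_convex_of_mul_eq_zero {α t s x₁ y₁ x₂ y₂ : ℝ} (hα : 1 < α) (ht : 0 ≤ t)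
    (hs : 0 ≤ s) (hx₁ : 0 ≤ x₁) (h : t * y₁ = 0) :
    powPersp α (t * x₁ + s * x₂) (t * y₁ + s * y₂) ≤
      ENNReal.ofReal t * powPersp α x₁ y₁ + ENNReal.ofReal s * powPersp α x₂ y₂ := by
  by_cases hx : t * x₁ = 0
  · rw [hx, h, zero_add, zero_add, powPersp_mul_mul α hs]
    exact le_add_self
  · have ht : 0 < t := ht.lt_of_ne (by rintro rfl; simp at hx)
    have hy₁ : y₁ = 0 := by simpa [ht.ne'] using h
    rw [hy₁, powPersp_zero_right hα (hx₁.lt_of_ne (by rintro rfl; simp at hx)),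
      ENNReal.mul_top (by simpa using ht), top_add]
    exact le_top

lemma powPersp_convex {α t s x₁ y₁ x₂ y₂ : ℝ} (hα : 1 < α) (ht : 0 ≤ t) (hs : 0 ≤ s)
    (hx₁ : 0 ≤ x₁) (hy₁ : 0 ≤ y₁) (hx₂ : 0 ≤ x₂) (hy₂ : 0 ≤ y₂) :
    powPersp α (t * x₁ + s * x₂) (t * y₁ + s * y₂) ≤
      ENNReal.ofReal t * powPersp α x₁ y₁ + ENNReal.ofReal s * powPersp α x₂ y₂ := by
  by_cases h₁ : t * y₁ = 0
  · exact powPersp_convex_of_mul_eq_zero hα ht hs hx₁ h₁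
  by_cases h₂ : s * y₂ = 0
  · rw [add_comm (t * x₁), add_comm (t * y₁), add_comm (ENNReal.ofReal t * _)]
    exact powPersp_convex_of_mul_eq_zero hα hs ht hx₂ h₂
  have ht' : 0 < t := ht.lt_of_ne (by rintro rfl; simp at h₁)
  have hs' : 0 < s := hs.lt_of_ne (by rintro rfl; simp at h₂)
  have hy₁' : 0 < y₁ := hy₁.lt_of_ne (by rintro rfl; simp at h₁)
  have hy₂' : 0 < y₂ := hy₂.lt_of_ne (by rintro rfl; simp at h₂)
  have hα₀ : 0 ≤ α := by linarith
  rw [powPersp_eq_ofReal hα₀ (by positivity) (by positivity), powPersp_eq_ofReal hα₀ hx₁ hy₁',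
    powPersp_eq_ofReal hα₀ hx₂ hy₂', ← ENNReal.ofReal_mul ht, ← ENNReal.ofReal_mul hs,
    ← ENNReal.ofReal_add (by positivity) (by positivity)]
  exact ENNReal.ofReal_le_ofReal
    (rpow_mul_rpow_one_sub_convex hα.le ht' hs' hx₁ hx₂ hy₁' hy₂')

def rdpRegion (α : ℝ) (K : ℝ≥0∞) : Set (ℝ × ℝ) :=
  {xy | xy.1 ∈ Set.Icc 0 1 ∧ xy.2 ∈ Set.Icc 0 1 ∧ Fα α xy.1 xy.2 ≤ K}

lemma convex_rdpRegion {α : ℝ} (hα : 1 < α) (K : ℝ≥0∞) : Convex ℝ (rdpRegion α K) := by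
  rintro ⟨x₁, y₁⟩ ⟨hx₁, hy₁, hF₁⟩ ⟨x₂, y₂⟩ ⟨hx₂, hy₂, hF₂⟩ t s ht hs hts
  simp only [rdpRegion, Prod.smul_mk, Prod.mk_add_mk, smul_eq_mul, Set.mem_ofPred_eq]
  refine ⟨(convex_Icc 0 1) hx₁ hx₂ ht hs hts, (convex_Icc 0 1) hy₁ hy₂ ht hs hts, ?_⟩
  have hcompl : ∀ a b : ℝ, 1 - (t * a + s * b) = t * (1 - a) + s * (1 - b) := by
    intro a b; linear_combination (-1 : ℝ) * hts
  rw [Fα_eq_powPersp, hcompl, hcompl]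
  calc _ ≤ (ENNReal.ofReal t * powPersp α x₁ y₁ + ENNReal.ofReal s * powPersp α x₂ y₂) +
        (ENNReal.ofReal t * powPersp α (1 - x₁) (1 - y₁) +
          ENNReal.ofReal s * powPersp α (1 - x₂) (1 - y₂)) :=
        add_le_add (powPersp_convex hα ht hs hx₁.1 hy₁.1 hx₂.1 hy₂.1)
          (powPersp_convex hα ht hs (sub_nonneg.2 hx₁.2) (sub_nonneg.2 hy₁.2)
            (sub_nonneg.2 hx₂.2) (sub_nonneg.2 hy₂.2))
    _ = ENNReal.ofReal t * Fα α x₁ y₁ + ENNReal.ofReal s * Fα α x₂ y₂ := by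
        simp only [Fα_eq_powPersp]; ring
    _ ≤ ENNReal.ofReal t * K + ENNReal.ofReal s * K := by gcongr
    _ = K := by rw [← add_mul, ← ENNReal.ofReal_add ht hs, hts, ENNReal.ofReal_one, one_mul]

lemma Icc_prod_Icc_subset_rdpRegion {α a b : ℝ} (hα : 1 < α) {K : ℝ≥0∞} (hab : a ≤ b)
    (ha : (a, a) ∈ rdpRegion α K) (hb : (b, b) ∈ rdpRegion α K)
    (hab' : (a, b) ∈ rdpRegion α K) (hba : (b, a) ∈ rdpRegion α K) :
    Set.Icc a b ×ˢ Set.Icc a b ⊆ rdpRegion α K := by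
  rw [← segment_eq_Icc hab, ← convexHull_pair, ← convexHull_prod]
  refine convexHull_min ?_ (convex_rdpRegion hα K)
  rintro ⟨x, y⟩ h
  simp only [Set.mem_prod, Set.mem_insert_iff, Set.mem_singleton_iff] at h
  obtain ⟨rfl | rfl, rfl | rfl⟩ := h <;> assumption

lemma IsChannel.le_one {ℓ k : ℕ} {S : Matrix (Fin ℓ) (Fin k) ℝ} (hS : IsChannel S)
    (r : Fin ℓ) (c : Fin k) : S r c ≤ 1 := by
  rw [← hS.2 c]
  exact Finset.single_le_sum (fun r' _ => hS.1 r' c) (mem_univ r)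

lemma isRDP_iff {ε α : ℝ} {k : ℕ} {S : Matrix (Fin 2) (Fin k) ℝ} :
    IsRDP ε α S ↔ IsChannel S ∧
      ∀ i j, (S 0 i, S 0 j) ∈ rdpRegion α (ENNReal.ofReal (Real.exp ((α - 1) * ε))) :=
  ⟨fun h => ⟨h.1, fun i j => ⟨⟨h.1.1 0 i, h.1.le_one 0 i⟩, ⟨h.1.1 0 j, h.1.le_one 0 j⟩, h.2 i j⟩⟩,
    fun h => ⟨h.1, fun i j => (h.2 i j).2.2⟩⟩

lemma lowerSemicontinuous_powPersp {α : ℝ} (hα : 0 ≤ α) :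
    LowerSemicontinuous fun xy : ℝ × ℝ => powPersp α xy.1 xy.2 := by
  intro xy
  by_cases h : ENNReal.ofReal xy.1 ^ α ≠ 0 ∨ ENNReal.ofReal xy.2 ^ (1 - α) ≠ ⊤
  · refine ContinuousAt.lowerSemicontinuousAt ?_
    have hcont : ∀ e : ℝ, Continuous fun r : ℝ => ENNReal.ofReal r ^ e := fun e =>
      ENNReal.continuous_rpow_const.comp ENNReal.continuous_ofReal
    exact ENNReal.Tendsto.mul (((hcont α).comp continuous_fst).tendsto xy) h
      (((hcont (1 - α)).comp continuous_snd).tendsto xy)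
      (Or.inr (ENNReal.rpow_ne_top_of_nonneg hα ENNReal.ofReal_ne_top))
  · -- the value at `xy` is `0 * ⊤ = 0`
    rw [not_or, not_ne_iff, not_ne_iff] at h
    intro c hc
    simp [powPersp, h.1, h.2] at hc

lemma lowerSemicontinuous_Fα {α : ℝ} (hα : 0 ≤ α) :
    LowerSemicontinuous fun xy : ℝ × ℝ => Fα α xy.1 xy.2 :=
  (lowerSemicontinuous_powPersp hα).add
    ((lowerSemicontinuous_powPersp hα).comp
      (by fun_prop : Continuous fun xy : ℝ × ℝ => (1 - xy.1, 1 - xy.2)))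

lemma isClosed_setOf_isRDP (ε : ℝ) {α : ℝ} (hα : 0 ≤ α) (k : ℕ) :
    IsClosed {S : Matrix (Fin 2) (Fin k) ℝ | IsRDP ε α S} := by
  have hchannel : IsClosed {S : Matrix (Fin 2) (Fin k) ℝ | IsChannel S} := by
    simp only [IsChannel, Set.ofPred_and, Set.ofPred_forall]
    exact (isClosed_iInter fun r => isClosed_iInter fun c => isClosed_le continuous_const
      (by fun_prop)).inter (isClosed_iInter fun c => isClosed_eq (by fun_prop) continuous_const)
  simp only [IsRDP, Set.ofPred_and, Set.ofPred_forall]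
  exact hchannel.inter (isClosed_iInter fun i => isClosed_iInter fun j =>
    (lowerSemicontinuous_Fα hα).isClosed_preimage _ |>.preimage
      (by fun_prop : Continuous fun S : Matrix (Fin 2) (Fin k) ℝ => (S 0 i, S 0 j)))

lemma isCompact_setOf_isRDP (ε : ℝ) {α : ℝ} (hα : 0 ≤ α) (k : ℕ) :
    IsCompact {S : Matrix (Fin 2) (Fin k) ℝ | IsRDP ε α S} := by
  have hbox : IsCompact (Set.univ.pi fun _ : Fin 2 => Set.univ.pi fun _ : Fin k =>
      Set.Icc (0 : ℝ) 1) :=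
    isCompact_univ_pi fun _ => isCompact_univ_pi fun _ => isCompact_Icc
  exact hbox.of_isClosed_subset (isClosed_setOf_isRDP ε hα k) fun S hS r _ c _ =>
    ⟨hS.1.1 r c, hS.1.le_one r c⟩

def rowChannel {k : ℕ} (x : Fin k → ℝ) : Matrix (Fin 2) (Fin k) ℝ :=
  Matrix.of ![x, 1 - x]

lemma IsChannel.eq_rowChannel {k : ℕ} {S : Matrix (Fin 2) (Fin k) ℝ} (hS : IsChannel S) :
    S = rowChannel (S 0) := by
  ext r c
  fin_cases r
  · rfl
  · have := hS.2 c
    simp only [Fin.sum_univ_two] at this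
    show S 1 c = 1 - S 0 c
    linarith

lemma isChannel_rowChannel {k : ℕ} {x : Fin k → ℝ} (hx : ∀ i, x i ∈ Set.Icc 0 1) :
    IsChannel (rowChannel x) := by
  refine ⟨fun r c => ?_, fun c => by simp [rowChannel, Fin.sum_univ_two]⟩
  fin_cases r
  · simpa [rowChannel] using (hx c).1
  · simpa [rowChannel] using (hx c).2

/-- The admissible pairs form a convex region, and it contains the four corners of
`[T 0 u, T 0 v]²` because `T` is RDP. -/
lemma isRDP_rowChannel_of_mem_Icc {ε α : ℝ} (hα : 1 < α) {k : ℕ} {T : Matrix (Fin 2) (Fin k) ℝ}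
    (hT : IsRDP ε α T) (u v : Fin k) {m : ℕ} {y : Fin m → ℝ}
    (hy : ∀ i, y i ∈ Set.Icc (T 0 u) (T 0 v)) : IsRDP ε α (rowChannel y) := by
  have hreg := (isRDP_iff.1 hT).2
  refine isRDP_iff.2 ⟨isChannel_rowChannel fun i => ?_, fun i j => ?_⟩
  · exact ⟨(hT.1.1 0 u).trans (hy i).1, (hy i).2.trans (hT.1.le_one 0 v)⟩
  · exact Icc_prod_Icc_subset_rdpRegion hα ((hy i).1.trans (hy i).2) (hreg u u) (hreg v v)
      (hreg u v) (hreg v u) ⟨hy i, hy j⟩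

lemma mul_detChannel_apply {k ℓ : ℕ} (U : Matrix (Fin ℓ) (Fin 2) ℝ) (f : Fin k → Fin 2)
    (r : Fin ℓ) (i : Fin k) : (U * detChannel f) r i = U r (f i) := by
  simp [Matrix.mul_apply, detChannel, mul_ite]

lemma rowChannel_mul_detChannel {k : ℕ} (c : Fin 2 → ℝ) (f : Fin k → Fin 2) :
    rowChannel c * detChannel f = rowChannel (c ∘ f) := by
  ext r i
  fin_cases r <;> simp [mul_detChannel_apply, rowChannel]

lemma IsRDP.mul_detChannel {ε α : ℝ} {k : ℕ} {U : Matrix (Fin 2) (Fin 2) ℝ} (hU : IsRDP ε α U)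
    (f : Fin k → Fin 2) : IsRDP ε α (U * detChannel f) := by
  refine ⟨⟨fun r c => ?_, fun c => ?_⟩, fun i j => ?_⟩ <;> simp only [mul_detChannel_apply]
  exacts [hU.1.1 r (f c), hU.1.2 (f c), hU.2 (f i) (f j)]

def outputPair {m k : ℕ} (p q : Fin k → ℝ) :
    Matrix (Fin m) (Fin k) ℝ →ₗ[ℝ] (Fin m → ℝ) × (Fin m → ℝ) where
  toFun S := (S *ᵥ p, S *ᵥ q)
  map_add' S S' := by simp [Matrix.add_mulVec]
  map_smul' c S := by simp [Matrix.smul_mulVec]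

lemma outputPair_apply {m k : ℕ} (p q : Fin k → ℝ) (S : Matrix (Fin m) (Fin k) ℝ) :
    outputPair p q S = (S *ᵥ p, S *ᵥ q) := rfl

lemma outputPair_mul {m n k : ℕ} (p q : Fin k → ℝ) (U : Matrix (Fin m) (Fin n) ℝ)
    (M : Matrix (Fin n) (Fin k) ℝ) : outputPair p q (U * M) = outputPair (M *ᵥ p) (M *ᵥ q) U := by
  simp [outputPair_apply, Matrix.mulVec_mulVec]

def rowShift {k : ℕ} (d : Fin k → ℝ) : Matrix (Fin 2) (Fin k) ℝ :=
  Matrix.of ![d, -d]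

lemma rowChannel_add {k : ℕ} (x d : Fin k → ℝ) :
    rowChannel (x + d) = rowChannel x + rowShift d := by
  ext i j
  fin_cases i
  · rfl
  · show 1 - (x j + d j) = 1 - x j + -d j
    ring

lemma rowShift_add {k : ℕ} (d₁ d₂ : Fin k → ℝ) :
    rowShift (d₁ + d₂) = rowShift d₁ + rowShift d₂ := by
  ext i j
  fin_cases i
  · rfl
  · exact neg_add (d₁ j) (d₂ j)

lemma outputPair_rowShift_eq_zero {k : ℕ} {p q d : Fin k → ℝ} :
    outputPair p q (rowShift d) = 0 ↔ d ⬝ᵥ p = 0 ∧ d ⬝ᵥ q = 0 := by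
  refine ⟨fun h => ⟨congr_fun (congr_arg Prod.fst h) 0, congr_fun (congr_arg Prod.snd h) 0⟩,
    fun ⟨hp, hq⟩ => ?_⟩
  refine Prod.ext (funext fun i => ?_) (funext fun i => ?_) <;> fin_cases i
  exacts [hp, (neg_dotProduct d p).trans (by rw [hp, neg_zero]; rfl), hq,
    (neg_dotProduct d q).trans (by rw [hq, neg_zero]; rfl)]

def jointRange (ε α : ℝ) {k : ℕ} (p q : Fin k → ℝ) : Set ((Fin 2 → ℝ) × (Fin 2 → ℝ)) :=
  outputPair p q '' {S | IsRDP ε α S}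

lemma eq_of_add_eq_two_smul_of_mem_extremePoints {E : Type*} [AddCommGroup E] [Module ℝ E]
    {A : Set E} {z y₁ y₂ : E} (hz : z ∈ A.extremePoints ℝ) (h₁ : y₁ ∈ A) (h₂ : y₂ ∈ A)
    (h : y₁ + y₂ = (2 : ℝ) • z) : y₁ = z := by
  have hseg : z ∈ segment ℝ y₁ y₂ :=
    ⟨1 / 2, 1 / 2, by norm_num, by norm_num, by norm_num, by
      rw [← smul_add, h, smul_smul]; norm_num⟩
  rcases (mem_extremePoints_iff_forall_segment.1 hz).2 y₁ h₁ y₂ h₂ hseg with h' | h'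
  · exact h'
  · rw [h', two_smul] at h
    exact add_right_cancel h

lemma lr_lt_lr_iff {k : ℕ} {p q : Fin k → ℝ} (hp : ∀ i, 0 ≤ p i) (hq : ∀ i, 0 ≤ q i)
    (hpq : ∀ i, 0 < p i + q i) {i j : Fin k} :
    lr p q i < lr p q j ↔ p i * q j < p j * q i := by
  unfold lr
  rcases (hq i).eq_or_lt with hqi | hqi <;> rcases (hq j).eq_or_lt with hqj | hqj
  · simp [← hqi, ← hqj]
  · simp only [← hqi, if_true, hqj.ne', not_top_lt, mul_zero, false_iff, not_lt]
    exact mul_nonneg (hp i) (hq j)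
  · have hpj : 0 < p j := by linarith [hpq j]
    simp only [hqi.ne', ← hqj, if_false, if_true, EReal.coe_lt_top, mul_zero, true_iff]
    positivity
  · simp only [hqi.ne', hqj.ne', if_false, EReal.coe_lt_coe_iff, div_lt_div_iff₀ hqi hqj]

lemma exists_pos_combination_of_lr_lt_lr {k : ℕ} {p q : Fin k → ℝ} (hp : ∀ i, 0 ≤ p i)
    (hq : ∀ i, 0 ≤ q i) (hpq : ∀ i, 0 < p i + q i) {u v w : Fin k}
    (huw : lr p q u < lr p q w) (hwv : lr p q w < lr p q v) :
    ∃ s t : ℝ, 0 < s ∧ 0 < t ∧ p w = s * p u + t * p v ∧ q w = s * q u + t * q v := by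
  rw [lr_lt_lr_iff hp hq hpq] at huw hwv
  have := hp u; have := hp v; have := hp w; have := hq u; have := hq v; have := hq w
  have hqw : 0 < q w := by nlinarith
  have hpw : 0 < p w := by nlinarith
  have hD : 0 < p v * q u - p u * q v := by
    have hmul := mul_lt_mul'' huw hwv (by positivity) (by positivity)
    have : p u * q v * (p w * q w) < p v * q u * (p w * q w) := by linarith
    linarith [lt_of_mul_lt_mul_right this (by positivity)]
  refine ⟨(p v * q w - p w * q v) / (p v * q u - p u * q v),
    (p w * q u - p u * q w) / (p v * q u - p u * q v),
    div_pos (by linarith) hD, div_pos (by linarith) hD, ?_, ?_⟩ <;>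
  · rw [div_mul_eq_mul_div, div_mul_eq_mul_div, ← add_div, eq_div_iff hD.ne']
    ring

section Perturbation

variable {ε α : ℝ} {k : ℕ} {p q x : Fin k → ℝ}
  (hx : outputPair p q (rowChannel x) ∈ (jointRange ε α p q).extremePoints ℝ)
include hx

lemma dotProduct_eq_zero_of_extreme {d₁ d₂ : Fin k → ℝ} (h₁ : IsRDP ε α (rowChannel (x + d₁)))
    (h₂ : IsRDP ε α (rowChannel (x + d₂))) (hp : (d₁ + d₂) ⬝ᵥ p = 0)
    (hq : (d₁ + d₂) ⬝ᵥ q = 0) : d₁ ⬝ᵥ p = 0 ∧ d₁ ⬝ᵥ q = 0 := by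
  have shift : ∀ d, outputPair p q (rowChannel (x + d)) =
      outputPair p q (rowChannel x) + outputPair p q (rowShift d) := fun d => by
    rw [rowChannel_add, map_add]
  have := eq_of_add_eq_two_smul_of_mem_extremePoints hx ⟨_, h₁, rfl⟩ ⟨_, h₂, rfl⟩ (by
    rw [shift, shift, add_add_add_comm, ← map_add (outputPair p q) (rowShift d₁), ← rowShift_add,
      outputPair_rowShift_eq_zero.2 ⟨hp, hq⟩, add_zero, two_smul])
  rwa [shift, add_eq_left, outputPair_rowShift_eq_zero] at this

variable {a b : ℝ}
  (hbox : ∀ y : Fin k → ℝ, (∀ i, y i ∈ Set.Icc a b) → IsRDP ε α (rowChannel y))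
  (hxab : ∀ i, x i ∈ Set.Icc a b)
include hbox hxab

lemma eq_or_eq_of_extreme {j : Fin k} (hj : 0 < p j + q j) : x j = a ∨ x j = b := by
  by_contra! h
  have ha : a < x j := (hxab j).1.lt_of_ne' h.1
  have hb : x j < b := (hxab j).2.lt_of_ne h.2
  set δ := min (x j - a) (b - x j)
  have hδ : 0 < δ := lt_min (sub_pos.2 ha) (sub_pos.2 hb)
  have hmove : ∀ c, |c| ≤ δ → IsRDP ε α (rowChannel (x + Pi.single j c)) := by
    intro c hc
    refine hbox _ fun i => ?_
    rcases eq_or_ne i j with rfl | hi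
    · have := abs_le.1 hc
      simp only [Pi.add_apply, Pi.single_eq_same, Set.mem_Icc]
      constructor <;> linarith [min_le_left (x i - a) (b - x i), min_le_right (x i - a) (b - x i)]
    · simpa [hi] using hxab i
  obtain ⟨hp, hq⟩ := dotProduct_eq_zero_of_extreme hx (hmove δ (abs_of_pos hδ).le)
    (hmove (-δ) (by rw [abs_neg, abs_of_pos hδ])) (by simp) (by simp)
  rw [single_dotProduct, mul_eq_zero, or_iff_right hδ.ne'] at hp hq
  linarith

/-- With `(p w, q w) = s • (p u, q u) + t • (p v, q v)` and `h = x w - x u`, the moves `s h e_u`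
and `t h e_v - h e_w`, scaled by `1 / (1 + s + t)`, keep the row in `[a, b]^k` and cancel on
the outputs. -/
lemma eq_of_lr_lt_lr (hp : ∀ i, 0 ≤ p i) (hq : ∀ i, 0 ≤ q i) (hpq : ∀ i, 0 < p i + q i)
    {u v w : Fin k} (huw : lr p q u < lr p q w) (hwv : lr p q w < lr p q v) (huv : x u = x v) :
    x w = x u := by
  by_contra hne
  obtain ⟨s, t, hs, ht, hpw, hqw⟩ := exists_pos_combination_of_lr_lt_lr hp hq hpq huw hwv
  have hvw : v ≠ w := by rintro rfl; exact lt_irrefl _ hwv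
  set c := 1 + s + t
  have hc : 0 < c := by positivity
  set h := x w - x u with hdef
  have hstep : ∀ {i j μ}, 0 ≤ μ → μ ≤ c → x i + μ / c * (x j - x i) ∈ Set.Icc a b :=
    fun h₀ h₁ => (convex_Icc a b).add_smul_sub_mem (hxab _) (hxab _)
      ⟨div_nonneg h₀ hc.le, (div_le_one hc).2 h₁⟩
  have h₁ : IsRDP ε α (rowChannel (x + Pi.single u (s / c * h))) := by
    refine hbox _ fun i => ?_
    rcases eq_or_ne i u with rfl | hi
    · simpa using hstep (j := w) hs.le (by linarith)
    · simpa [hi] using hxab i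
  have h₂ : IsRDP ε α (rowChannel (x + (Pi.single v (t / c * h) - Pi.single w (1 / c * h)))) := by
    refine hbox _ fun i => ?_
    rcases eq_or_ne i v with rfl | hi
    · simpa [hvw, h, huv] using hstep (i := i) (j := w) ht.le (by linarith)
    rcases eq_or_ne i w with rfl | hi'
    · convert hstep (i := i) (j := u) zero_le_one (by linarith) using 1
      rw [Pi.add_apply, Pi.sub_apply, Pi.single_eq_of_ne hi, Pi.single_eq_same, hdef]
      ring
    · simpa [hi, hi'] using hxab i
  obtain ⟨hpu, hqu⟩ := dotProduct_eq_zero_of_extreme hx h₁ h₂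
    (by simp only [add_dotProduct, sub_dotProduct, single_dotProduct, hpw]; ring)
    (by simp only [add_dotProduct, sub_dotProduct, single_dotProduct, hqw]; ring)
  have hh : h ≠ 0 := sub_ne_zero.2 hne
  rw [single_dotProduct] at hpu hqu
  simp only [mul_eq_zero, div_eq_zero_iff, hs.ne', hc.ne', hh, or_self, false_or] at hpu hqu
  linarith [hpq u]

lemma isThresholdChannel_of_extreme (hp : ∀ i, 0 ≤ p i) (hq : ∀ i, 0 ≤ q i)
    (hpq : ∀ i, 0 < p i + q i) :
    IsThresholdChannel p q (detChannel fun i => if x i = b then (0 : Fin 2) else 1) := by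
  refine ⟨_, rfl, fun u v w _ hf huw hwv => ?_⟩
  have huv : x u = x v := by
    rcases eq_or_eq_of_extreme hx hbox hxab (hpq u) with hu | hu <;>
      rcases eq_or_eq_of_extreme hx hbox hxab (hpq v) with hv | hv <;>
      simp_all
  simp only [eq_of_lr_lt_lr hx hbox hxab hp hq hpq huw hwv huv]

end Perturbation

instance {m n : Type*} : LocallyConvexSpace ℝ (Matrix m n ℝ) :=
  inferInstanceAs (LocallyConvexSpace ℝ (m → n → ℝ))

/-- The preimage of an extreme point of `f '' C` is a face of `C`; by Krein–Milman it contains an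
extreme point of `C`. -/
lemma exists_mem_extremePoints_apply_eq {E F : Type*} [AddCommGroup E] [Module ℝ E]
    [TopologicalSpace E] [T2Space E] [IsTopologicalAddGroup E] [ContinuousSMul ℝ E]
    [LocallyConvexSpace ℝ E] [AddCommGroup F] [Module ℝ F] [TopologicalSpace F] [T1Space F]
    {C : Set E} (hC : IsCompact C) (f : E →ₗ[ℝ] F) (hf : Continuous f) {z : F}
    (hz : z ∈ (f '' C).extremePoints ℝ) : ∃ x ∈ C.extremePoints ℝ, f x = z := by
  obtain ⟨x₀, hx₀, rfl⟩ := hz.1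
  have hface : IsExtreme ℝ C (C ∩ f ⁻¹' {f x₀}) := by
    refine ⟨Set.inter_subset_left, fun x₁ h₁ x₂ h₂ x hx hseg => ?_⟩
    have hseg' : f x₀ ∈ openSegment ℝ (f x₁) (f x₂) := by
      rw [← hx.2, ← LinearMap.coe_toAffineMap, ← image_openSegment]
      exact Set.mem_image_of_mem _ hseg
    exact Set.mem_inter h₁ (hz.2 ⟨x₁, h₁, rfl⟩ ⟨x₂, h₂, rfl⟩ hseg')
  obtain ⟨x, hx⟩ := (hC.inter_right (isClosed_singleton.preimage hf)).extremePoints_nonempty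
    ⟨x₀, hx₀, rfl⟩
  exact ⟨x, hface.extremePoints_subset_extremePoints hx, hx.1.2⟩

lemma exists_isRDP_mul_threshold {ε α : ℝ} (hα : 1 < α) {k : ℕ} [Nonempty (Fin k)]
    {p q : Fin k → ℝ} (hp : ∀ i, 0 ≤ p i) (hq : ∀ i, 0 ≤ q i) (hpq : ∀ i, 0 < p i + q i)
    {T : Matrix (Fin 2) (Fin k) ℝ} (hT : IsRDP ε α T)
    (hext : outputPair p q T ∈ (jointRange ε α p q).extremePoints ℝ) :
    ∃ (U : Matrix (Fin 2) (Fin 2) ℝ) (f : Fin k → Fin 2),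
      IsRDP ε α U ∧ IsThresholdChannel p q (detChannel f) ∧ U * detChannel f = T := by
  obtain ⟨u, hu⟩ := Finite.exists_min (T 0)
  obtain ⟨v, hv⟩ := Finite.exists_max (T 0)
  have hbox {m : ℕ} (y : Fin m → ℝ) : (∀ i, y i ∈ Set.Icc (T 0 u) (T 0 v)) →
      IsRDP ε α (rowChannel y) := fun hy => isRDP_rowChannel_of_mem_Icc hα hT u v hy
  have hxab : ∀ i, T 0 i ∈ Set.Icc (T 0 u) (T 0 v) := fun i => ⟨hu i, hv i⟩
  rw [hT.1.eq_rowChannel] at hext ⊢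
  refine ⟨rowChannel ![T 0 v, T 0 u], _, hbox _ fun i => ?_,
    isThresholdChannel_of_extreme hext (fun y => hbox y) hxab hp hq hpq, ?_⟩
  · fin_cases i
    exacts [hxab v, hxab u]
  · rw [rowChannel_mul_detChannel]
    congr 1
    funext i
    rcases eq_or_eq_of_extreme hext (fun y => hbox y) hxab (hpq i) with h | h <;>
      simp only [Function.comp_apply] <;> split_ifs <;> simp_all

theorem stmt18_general (ε α : ℝ) (hα : 1 < α) (k : ℕ)
    (p q : Fin k → ℝ) (hp : IsDist p) (hq : IsDist q) (hpq : ∀ i, 0 < p i + q i)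
    (A : Set ((Fin 2 → ℝ) × (Fin 2 → ℝ)))
    (hA : A = {z | ∃ S : Matrix (Fin 2) (Fin k) ℝ,
        IsRDP ε α S ∧ z = (S.mulVec p, S.mulVec q)})
    (T : Matrix (Fin 2) (Fin k) ℝ) (hT : IsRDP ε α T)
    (hext : (T.mulVec p, T.mulVec q) ∈ A.extremePoints ℝ) :
    ∃ (T₂ : Matrix (Fin 2) (Fin k) ℝ) (T₁ : Matrix (Fin 2) (Fin 2) ℝ),
      IsThresholdChannel p q T₂ ∧
      T₁ ∈ ({S : Matrix (Fin 2) (Fin 2) ℝ | IsRDP ε α S}).extremePoints ℝ ∧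
      (T.mulVec p, T.mulVec q) = ((T₁ * T₂).mulVec p, (T₁ * T₂).mulVec q) := by
  have : Nonempty (Fin k) := by
    by_contra h
    simpa [not_nonempty_iff.1 h] using hp.2
  have hA' : A = jointRange ε α p q := by
    ext z
    simp [hA, jointRange, outputPair_apply, eq_comm]
  rw [hA'] at hext
  obtain ⟨U, f, hU, hthreshold, rfl⟩ := exists_isRDP_mul_threshold hα hp.1 hq.1 hpq hT hext
  set g := outputPair (m := 2) ((detChannel f).mulVec p) ((detChannel f).mulVec q)
  have hsub : g '' {S | IsRDP ε α S} ⊆ jointRange ε α p q := by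
    rintro _ ⟨S, hS, rfl⟩
    exact ⟨_, hS.mul_detChannel f, outputPair_mul p q S _⟩
  have hz : g U ∈ (g '' {S | IsRDP ε α S}).extremePoints ℝ :=
    inter_extremePoints_subset_extremePoints_of_subset hsub
      ⟨⟨U, hU, rfl⟩, by rwa [← outputPair_mul]⟩
  obtain ⟨T₁, hT₁, hgT₁⟩ := exists_mem_extremePoints_apply_eq
    (isCompact_setOf_isRDP ε (by linarith) 2) g (LinearMap.continuous_of_finiteDimensional g) hz
  refine ⟨detChannel f, T₁, hthreshold, hT₁, ?_⟩
  change outputPair p q (U * detChannel f) = outputPair p q (T₁ * detChannel f)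
  rw [outputPair_mul, outputPair_mul, hgT₁]

/-- Extreme points of the joint range under Rényi differential privacy with binary outputs:
decomposition into a binary threshold channel followed by an extreme RDP channel. -/
theorem stmt18 (ε α : ℝ) (hε : 0 < ε) (hα : 1 < α) (k : ℕ)
    (p q : Fin k → ℝ) (hp : IsDist p) (hq : IsDist q) (hpq : ∀ i, 0 < p i + q i)
    (A : Set ((Fin 2 → ℝ) × (Fin 2 → ℝ)))
    (hA : A = {z | ∃ S : Matrix (Fin 2) (Fin k) ℝ,
        IsRDP ε α S ∧ z = (S.mulVec p, S.mulVec q)})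
    (T : Matrix (Fin 2) (Fin k) ℝ) (hT : IsRDP ε α T)
    (hext : (T.mulVec p, T.mulVec q) ∈ A.extremePoints ℝ) :
    ∃ (T₂ : Matrix (Fin 2) (Fin k) ℝ) (T₁ : Matrix (Fin 2) (Fin 2) ℝ),
      IsThresholdChannel p q T₂ ∧
      T₁ ∈ ({S : Matrix (Fin 2) (Fin 2) ℝ | IsRDP ε α S}).extremePoints ℝ ∧
      (T.mulVec p, T.mulVec q) = ((T₁ * T₂).mulVec p, (T₁ * T₂).mulVec q) :=
  stmt18_general ε α hα k p q hp hq hpq A hA T hT hext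
end
end
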